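/- arXiv:2604.20778 — 8 statements merged into one kernel-verified Lean document; each statement's English description precedes it below -/
import Mathlib

section
/- Let M be a finite matroid and let X, Y be subsets of the ground set of M. Then r_M(X) + r_M(Y) = r_M(X ∪ Y) + r_M(X ∩ Y) if and only if M has an independent set B such that B ∩ X is a basis of X in M and B ∩ Y is a basis of Y in M. -/
open Set

namespace Matroid

variable {α : Type*} {ι : Type*}

/-- The deletion of a set `D` of elements from `M`. -/
def delete' (M : Matroid α) (D : Set α) : Matroid α := M ↾ (M.E \ D)

/-- The contraction of a set `C` of elements from `M`, defined as the dual of the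
deletion of `C` from the dual. -/
def contract' (M : Matroid α) (C : Set α) : Matroid α := (M✶.delete' C)✶

/-- A circuit of `M` is a minimal dependent subset of the ground set. -/
def Circuit (M : Matroid α) (C : Set α) : Prop :=
  C ⊆ M.E ∧ ¬ M.Indep C ∧ ∀ I, I ⊂ C → M.Indep I

/-- The rank of a set `X` in `M`, valued in `ℕ∞`. It is the supremum of the `encard`s of
the independent subsets of `X`; equivalently, the `encard` of any basis of `X`. -/
noncomputable def eRk' (M : Matroid α) (X : Set α) : ℕ∞ :=
  ⨆ I : {I : Set α // M.Indep I ∧ I ⊆ X}, I.1.encard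

/-- The rank of the matroid `M`, valued in `ℕ∞`. -/
noncomputable def eRank' (M : Matroid α) : ℕ∞ := M.eRk' M.E

/-- The nullity of a set `X` in `M`, valued in `ℕ∞` : the corank of the restriction
of `M` to `X`. -/
noncomputable def nullity (M : Matroid α) (X : Set α) : ℕ∞ := (M ↾ X)✶.eRank'

/-- The relative rank of `Y` with respect to `X` : the rank of `Y \ X` in `M / X`. -/
noncomputable def eRelRk (M : Matroid α) (X Y : Set α) : ℕ∞ := (M.contract' X).eRk' (Y \ X)

/-- `B` is a mutual basis in `M` for the indexed set family `X` if `B` is independent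
and `X i ∩ B` is a basis of `X i` in `M` for each index `i`. -/
def IsMutualBasis (M : Matroid α) (B : Set α) (X : ι → Set α) : Prop :=
  M.Indep B ∧ ∀ i, M.IsBasis (X i ∩ B) (X i)

/-- An indexed set family is modular in `M` if it has a mutual basis. -/
def IsModularFamily (M : Matroid α) (X : ι → Set α) : Prop := ∃ B, M.IsMutualBasis B X

/-- `B` is a mutual basis in `M` for the collection `𝓧` of sets if `B` is independent
and `X ∩ B` is a basis of `X` in `M` for each `X ∈ 𝓧`. -/
def IsMutualBasisSet (M : Matroid α) (B : Set α) (𝓧 : Set (Set α)) : Prop :=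
  M.Indep B ∧ ∀ X ∈ 𝓧, M.IsBasis (X ∩ B) X

/-- A collection of sets is modular in `M` if it has a mutual basis. -/
def IsModularSetFamily (M : Matroid α) (𝓧 : Set (Set α)) : Prop :=
  ∃ B, M.IsMutualBasisSet B 𝓧

/-- `(X, Y)` is a modular pair in `M` if `{X, Y}` has a mutual basis. -/
def IsModularPair (M : Matroid α) (X Y : Set α) : Prop := M.IsModularSetFamily {X, Y}

/-- A flat `F` of `M` is modular if it forms a modular pair with every flat of `M`. -/
def IsModularFlat (M : Matroid α) (F : Set α) : Prop :=
  M.IsFlat F ∧ ∀ G, M.IsFlat G → M.IsModularPair F G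

/-- A matroid is modular if every flat is modular. -/
def Modular (M : Matroid α) : Prop := ∀ F, M.IsFlat F → M.IsModularFlat F

/-- An indexed family of sets is skew in `M` if it is modular in `M`, and the
intersection of any two distinct members consists of loops. -/
def IsSkewFamily (M : Matroid α) (X : ι → Set α) : Prop :=
  M.IsModularFamily X ∧ ∀ ⦃i j⦄, i ≠ j → X i ∩ X j ⊆ M.closure ∅

/-- A modular cut of `M` : a collection of flats that is up-closed, closed under
intersections of modular pairs, and closed under intersections of infinite
modular chains. -/
def IsModularCut (M : Matroid α) (𝓕 : Set (Set α)) : Prop :=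
  (∀ F ∈ 𝓕, M.IsFlat F) ∧
  (∀ F F', F ∈ 𝓕 → M.IsFlat F' → F ⊆ F' → F' ∈ 𝓕) ∧
  (∀ F F', F ∈ 𝓕 → F' ∈ 𝓕 → M.IsModularPair F F' → F ∩ F' ∈ 𝓕) ∧
  (∀ 𝓒 ⊆ 𝓕, 𝓒.Infinite → IsChain (· ⊆ ·) 𝓒 → M.IsModularSetFamily 𝓒 → ⋂₀ 𝓒 ∈ 𝓕)

/-- `N` is a quotient of `M` if they have the same ground set, and every set's closure
in `M` is contained in its closure in `N`. -/
def IsQuotient (N M : Matroid α) : Prop := N.E = M.E ∧ ∀ X, M.closure X ⊆ N.closure X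

/-- A hyperplane of `M` is a maximal proper flat of `M`. -/
def Hyperplane (M : Matroid α) (H : Set α) : Prop :=
  M.IsFlat H ∧ H ≠ M.E ∧ ∀ F, M.IsFlat F → H ⊂ F → F = M.E

/-- The discrepancy of the pair `(N, M)` : the minimum of `(B \ B₀).encard` over all
`(N,M)`-basis pairs, i.e. pairs `(B₀, B)` where `B₀` is a base of `N`, `B` is a base
of `M` and `B₀ ⊆ B`. -/
noncomputable def discrepancy (N M : Matroid α) : ℕ∞ :=
  ⨅ p : {p : Set α × Set α // N.IsBase p.1 ∧ M.IsBase p.2 ∧ p.1 ⊆ p.2},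
    (p.1.2 \ p.1.1).encard

/-! Extend a basis `I` of `X ∩ Y` to a basis `B` of `X ∪ Y`. Then
`|X ∩ B| + |Y ∩ B| = |B| + |I| = r(X ∪ Y) + r(X ∩ Y)`,
while `|X ∩ B| ≤ r(X)` and `|Y ∩ B| ≤ r(Y)`; so modularity of the ranks forces both
inequalities to be equalities, i.e. `X ∩ B` and `Y ∩ B` are bases. Conversely, for a mutual
basis `B` the set `(X ∪ Y) ∩ B` spans `X ∪ Y`, so
`r(X) + r(Y) = |(X ∪ Y) ∩ B| + |X ∩ Y ∩ B| ≤ r(X ∪ Y) + r(X ∩ Y)`,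
the reverse of submodularity. -/

lemma _root_.ENat.eq_of_add_eq_add_of_le {a b c d : ℕ∞} (hac : a ≤ c) (hbd : b ≤ d)
    (hd : d ≠ ⊤) (h : a + b = c + d) : a = c :=
  hac.antisymm <| (WithTop.add_le_add_iff_right hd).1 (h ▸ add_le_add_right hbd a)

variable {M : Matroid α} {B I X Y : Set α}

lemma eRk'_eq_eRk (M : Matroid α) (X : Set α) : M.eRk' X = M.eRk X := by
  refine le_antisymm (iSup_le fun I ↦ I.2.1.encard_le_eRk_of_subset I.2.2) ?_
  obtain ⟨I, hI⟩ := M.exists_isBasis' X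
  rw [← hI.encard_eq_eRk]
  exact le_iSup (fun I : {I : Set α // M.Indep I ∧ I ⊆ X} ↦ I.1.encard)
    ⟨I, hI.indep, hI.subset⟩

lemma encard_inter_add_encard_inter (B X Y : Set α) :
    (X ∩ B).encard + (Y ∩ B).encard = ((X ∪ Y) ∩ B).encard + (X ∩ Y ∩ B).encard := by
  rw [← encard_union_add_encard_inter, ← union_inter_distrib_right,
    ← inter_inter_distrib_right]

lemma IsRkFinite.isBasis_of_encard_eq (hXf : M.IsRkFinite X) (hI : M.Indep I) (hIX : I ⊆ X)
    (h : I.encard = M.eRk X) (hX : X ⊆ M.E := by aesop_mat) : M.IsBasis I X :=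
  (isBasis_iff_indep_encard_eq_of_finite (hXf.finite_of_indep_subset hI hIX) hX).2 ⟨hIX, hI, h⟩

lemma eRk_add_eRk_eq_of_isBasis_inter (hB : M.Indep B) (hBX : M.IsBasis (X ∩ B) X)
    (hBY : M.IsBasis (Y ∩ B) Y) : M.eRk X + M.eRk Y = M.eRk (X ∪ Y) + M.eRk (X ∩ Y) := by
  have hU : M.IsBasis ((X ∪ Y) ∩ B) (X ∪ Y) := by
    rw [union_inter_distrib_right]
    exact hBX.union_isBasis_union hBY
      (hB.subset (union_subset inter_subset_right inter_subset_right))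
  refine le_antisymm ?_ (add_comm (M.eRk (X ∩ Y)) _ ▸ M.eRk_inter_add_eRk_union_le X Y)
  rw [← hBX.encard_eq_eRk, ← hBY.encard_eq_eRk, encard_inter_add_encard_inter, hU.encard_eq_eRk]
  exact add_le_add_right
    ((hB.subset inter_subset_right).encard_le_eRk_of_subset inter_subset_left) _

lemma exists_isBasis_union_encard_inter_add_encard_inter_eq (hX : X ⊆ M.E) (hY : Y ⊆ M.E) :
    ∃ B, M.IsBasis B (X ∪ Y) ∧
      (X ∩ B).encard + (Y ∩ B).encard = M.eRk (X ∪ Y) + M.eRk (X ∩ Y) := by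
  obtain ⟨I, hI⟩ := M.exists_isBasis (X ∩ Y) (inter_subset_left.trans hX)
  obtain ⟨B, hB, hBI⟩ := hI.exists_isBasis_inter_eq_of_superset
    (inter_subset_left.trans subset_union_left) (union_subset hX hY)
  refine ⟨B, hB, ?_⟩
  rw [encard_inter_add_encard_inter, inter_eq_self_of_subset_right hB.subset, inter_comm (X ∩ Y),
    hBI, hB.encard_eq_eRk, hI.encard_eq_eRk]

lemma exists_isBasis_inter_of_eRk_add_eRk_eq (hXf : M.IsRkFinite X) (hYf : M.IsRkFinite Y)
    (hX : X ⊆ M.E) (hY : Y ⊆ M.E) (h : M.eRk X + M.eRk Y = M.eRk (X ∪ Y) + M.eRk (X ∩ Y)) :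
    ∃ B, M.Indep B ∧ M.IsBasis (X ∩ B) X ∧ M.IsBasis (Y ∩ B) Y := by
  obtain ⟨B, hB, hcard⟩ := exists_isBasis_union_encard_inter_add_encard_inter_eq hX hY
  rw [← h] at hcard
  have hindep (Z : Set α) : M.Indep (Z ∩ B) := hB.indep.subset inter_subset_right
  have hle (Z : Set α) : (Z ∩ B).encard ≤ M.eRk Z :=
    (hindep Z).encard_le_eRk_of_subset inter_subset_left
  have hXB := ENat.eq_of_add_eq_add_of_le (hle X) (hle Y) hYf.eRk_lt_top.ne hcard
  rw [add_comm, add_comm (M.eRk X)] at hcard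
  have hYB := ENat.eq_of_add_eq_add_of_le (hle Y) (hle X) hXf.eRk_lt_top.ne hcard
  exact ⟨B, hB.indep, hXf.isBasis_of_encard_eq (hindep X) inter_subset_left hXB,
    hYf.isBasis_of_encard_eq (hindep Y) inter_subset_left hYB⟩

/-- In a finite matroid `M`, subsets `X, Y` of the ground set satisfy
`r (X) + r (Y) = r (X ∪ Y) + r (X ∩ Y)` if and only if `M` has an independent set `B`
with `X ∩ B` a basis of `X` and `Y ∩ B` a basis of `Y`. -/
theorem eRk_add_eRk_eq_iff_exists_mutualBasis (M : Matroid α) [M.Finite]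
    {X Y : Set α} (hX : X ⊆ M.E) (hY : Y ⊆ M.E) :
    M.eRk' X + M.eRk' Y = M.eRk' (X ∪ Y) + M.eRk' (X ∩ Y) ↔
      ∃ B, M.Indep B ∧ M.IsBasis (X ∩ B) X ∧ M.IsBasis (Y ∩ B) Y := by
  simp only [eRk'_eq_eRk]
  exact ⟨exists_isBasis_inter_of_eRk_add_eRk_eq (M.isRkFinite_set X) (M.isRkFinite_set Y) hX hY,
    fun ⟨_, hB, hBX, hBY⟩ ↦ eRk_add_eRk_eq_of_isBasis_inter hB hBX hBY⟩
end Matroid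
end

section
/- Let ⟨X_a : a ∈ A⟩ be a pairwise disjoint family of subsets of the ground set of a matroid M. Then the following are equivalent: (1) ⟨X_a⟩ is skew in M; (2) the restriction M | ⋃_a X_a is the direct sum of the restrictions M | X_a over a ∈ A; (3) every circuit of M contained in ⋃_a X_a is contained in X_a for some a ∈ A. -/
/-!
The heart of the matter is the case of two disjoint sets `X`, `Y`: if bases `I` of `X` and `J` of
`Y` have independent union, then every basis of `X` can take the place of `I`, so contracting `Y`
leaves the independent subsets of `X` untouched.
A circuit meeting both `X` and `Y` would then have a proper, hence independent, subset `C \ Y`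
that is dependent in `M ／ Y`. Applied to `X i` and the union of the other members this gives
(1) ⇒ (3). For (3) ⇒ (2), a dependent set contains a circuit; for (2) ⇒ (1), the union of bases
of the `X i` is independent in the direct sum, hence a mutual basis.
-/

open Set

namespace Matroid

variable {α : Type*} {ι : Type*}

lemma circuit_iff_isCircuit {M : Matroid α} {C : Set α} : M.Circuit C ↔ M.IsCircuit C := by
  rw [isCircuit_iff_forall_ssubset, Circuit, Dep]
  tauto

variable {M : Matroid α} {C B : Set α}

section Pair

variable {D I J X Y : Set α}

lemma Indep.contract_indep_of_isBasis_union (hD : M.Indep D) (hDX : D ⊆ X)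
    (hI : M.IsBasis I X) (hJ : M.IsBasis J Y) (hXY : Disjoint X Y) (hIJ : M.Indep (I ∪ J)) :
    (M ／ Y).Indep D := by
  obtain ⟨D', hD', hDD'⟩ := hD.subset_isBasis_of_subset hDX hI.subset_ground
  have hD'J : M.Indep (D' ∪ J) := by
    -- both sides say `(M ／ X).Indep J`
    rw [union_comm, ← hD'.contract_indep_iff_of_disjoint (hXY.mono_right hJ.subset),
      hI.contract_indep_iff_of_disjoint (hXY.mono_right hJ.subset), union_comm]
    exact hIJ
  exact ((hJ.contract_indep_iff_of_disjoint (hXY.symm.mono_right hD'.subset)).2 hD'J).subset hDD'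

lemma IsCircuit.subset_or_subset_of_isBasis_union (hC : M.IsCircuit C) (hCXY : C ⊆ X ∪ Y)
    (hI : M.IsBasis I X) (hJ : M.IsBasis J Y) (hXY : Disjoint X Y) (hIJ : M.Indep (I ∪ J)) :
    C ⊆ X ∨ C ⊆ Y := by
  by_contra! ⟨hCX, hCY⟩
  have hCdep : (M ／ Y).Dep (C \ Y) := hC.contract_dep_of_not_subset hCY
  have hCssub : C \ Y ⊂ C := by
    obtain ⟨e, heC, heX⟩ := not_subset.1 hCX
    exact sdiff_ssubset_left_iff.2 ⟨e, heC, (hCXY heC).resolve_left heX⟩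
  exact hCdep.not_indep <| (hC.ssubset_indep hCssub).contract_indep_of_isBasis_union
    (sdiff_subset_iff.2 (union_comm X Y ▸ hCXY)) hI hJ hXY hIJ

end Pair

variable {X : ι → Set α}

lemma IsMutualBasis.isBasis_inter_iUnion (hB : M.IsMutualBasis B X) (S : Set ι) :
    M.IsBasis (B ∩ ⋃ i ∈ S, X i) (⋃ i ∈ S, X i) := by
  refine (hB.1.subset inter_subset_left).isBasis_of_subset_of_subset_closure inter_subset_right ?_
  refine iUnion₂_subset fun i hi ↦ (hB.2 i).subset_closure.trans (M.closure_subset_closure ?_)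
  rw [inter_comm]
  exact inter_subset_inter_right _ (subset_biUnion_of_mem hi)

lemma IsSkewFamily.exists_subset_of_isCircuit (hX : M.IsSkewFamily X)
    (hdj : Pairwise (Function.onFun Disjoint X)) (hC : M.IsCircuit C) (hCX : C ⊆ ⋃ i, X i) :
    ∃ i, C ⊆ X i := by
  obtain ⟨⟨B, hB⟩, -⟩ := hX
  obtain ⟨e, he⟩ := hC.nonempty
  obtain ⟨i, hei⟩ := mem_iUnion.1 (hCX he)
  have hXi : Disjoint (X i) (⋃ j ∈ ({i}ᶜ : Set ι), X j) :=
    disjoint_iUnion₂_right.2 fun j hj ↦ hdj (Ne.symm hj)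
  have hCXi : C ⊆ X i ∪ ⋃ j ∈ ({i}ᶜ : Set ι), X j := by
    intro x hx
    obtain ⟨j, hxj⟩ := mem_iUnion.1 (hCX hx)
    obtain rfl | hji := eq_or_ne j i
    · exact .inl hxj
    · exact .inr (mem_biUnion hji hxj)
  have hBi : M.Indep ((X i ∩ B) ∪ (B ∩ ⋃ j ∈ ({i}ᶜ : Set ι), X j)) :=
    hB.1.subset (union_subset inter_subset_right inter_subset_left)
  refine ⟨i, (hC.subset_or_subset_of_isBasis_union hCXi (hB.2 i) (hB.isBasis_inter_iUnion _)
    hXi hBi).resolve_right fun hCY ↦ hXi.ne_of_mem hei (hCY he) rfl⟩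

lemma restrict_iUnion_eq_disjointSigma_of_forall_isCircuit
    (hdj : Pairwise (Function.onFun Disjoint X))
    (h : ∀ C, M.IsCircuit C → C ⊆ ⋃ i, X i → ∃ i, C ⊆ X i) :
    M ↾ (⋃ i, X i) = Matroid.disjointSigma (fun i ↦ M ↾ X i)
      (by simpa [Function.onFun] using hdj) := by
  refine ext_indep (by simp) fun I _ ↦ ?_
  simp only [restrict_indep_iff, disjointSigma_indep_iff, restrict_ground_eq]
  refine ⟨fun ⟨hI, hIX⟩ ↦ ⟨fun i ↦ ⟨hI.subset inter_subset_left, inter_subset_right⟩, hIX⟩,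
    fun ⟨hIi, hIX⟩ ↦ ⟨?_, hIX⟩⟩
  by_contra hInd
  have hIE : I ⊆ M.E := fun x hx ↦
    have ⟨i, hxi⟩ := mem_iUnion.1 (hIX hx)
    (hIi i).1.subset_ground ⟨hx, hxi⟩
  obtain ⟨C, hCI, hC⟩ := Dep.exists_isCircuit_subset ⟨hInd, hIE⟩
  obtain ⟨i, hCi⟩ := h C hC (hCI.trans hIX)
  exact hC.not_indep ((hIi i).1.subset (subset_inter hCI hCi))

lemma isSkewFamily_of_restrict_iUnion_eq_disjointSigma (hXE : ∀ i, X i ⊆ M.E)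
    (hdj : Pairwise (Function.onFun Disjoint X))
    (h : M ↾ (⋃ i, X i) = Matroid.disjointSigma (fun i ↦ M ↾ X i)
      (by simpa [Function.onFun] using hdj)) :
    M.IsSkewFamily X := by
  choose I hI using fun i ↦ M.exists_isBasis (X i) (hXE i)
  have hIX : ∀ i, X i ∩ ⋃ j, I j = I i := fun i ↦ by
    refine subset_antisymm (fun x ⟨hxi, hxI⟩ ↦ ?_) (subset_inter (hI i).subset (subset_iUnion I i))
    obtain ⟨j, hxj⟩ := mem_iUnion.1 hxI
    obtain rfl | hji := eq_or_ne j i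
    · exact hxj
    · exact absurd rfl ((hdj hji).ne_of_mem ((hI j).subset hxj) hxi)
  have hIndep : (M ↾ ⋃ i, X i).Indep (⋃ i, I i) := by
    rw [h, disjointSigma_indep_iff]
    simp only [restrict_indep_iff, restrict_ground_eq, inter_comm _ (X _), hIX]
    exact ⟨fun i ↦ ⟨(hI i).indep, (hI i).subset⟩, iUnion_mono fun i ↦ (hI i).subset⟩
  refine ⟨⟨⋃ i, I i, hIndep.of_restrict, fun i ↦ hIX i ▸ hI i⟩, fun i j hij ↦ ?_⟩
  rw [(hdj hij).inter_eq]
  exact empty_subset _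

/-- For a pairwise disjoint family `X` of subsets of the ground set
of `M`, the following are equivalent : (1) `X` is skew in `M`; (2) the restriction of
`M` to the union of `X` is the direct sum of the restrictions `M ↾ X i`;
(3) every circuit of `M` contained in the union of `X` is contained in some `X i`. -/
theorem isSkewFamily_iff_restrict_eq_disjointSigma_iff_forall_circuit
    (M : Matroid α) (X : ι → Set α) (hXE : ∀ i, X i ⊆ M.E)
    (hdj : Pairwise (Function.onFun Disjoint X)) :
    (M.IsSkewFamily X ↔
      M ↾ (⋃ i, X i) = Matroid.disjointSigma (fun i ↦ M ↾ X i)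
        (by simpa [Function.onFun] using hdj)) ∧
    (M.IsSkewFamily X ↔ ∀ C, M.Circuit C → C ⊆ ⋃ i, X i → ∃ i, C ⊆ X i) := by
  simp only [circuit_iff_isCircuit]
  have hskew_circuit : M.IsSkewFamily X → ∀ C, M.IsCircuit C → C ⊆ ⋃ i, X i → ∃ i, C ⊆ X i :=
    fun hX _ hC ↦ hX.exists_subset_of_isCircuit hdj hC
  have hcircuit_sum := restrict_iUnion_eq_disjointSigma_of_forall_isCircuit (M := M) hdj
  have hsum_skew := isSkewFamily_of_restrict_iUnion_eq_disjointSigma hXE hdj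
  exact ⟨⟨fun h ↦ hcircuit_sum (hskew_circuit h), hsum_skew⟩,
    ⟨hskew_circuit, fun h ↦ hsum_skew (hcircuit_sum h)⟩⟩

end Matroid
end

section
/- Let X and Y be subsets of the ground set of a matroid M. If I and I' are bases for X in M, and J and J' are bases for Y in M, then |I ∩ J| + n_M(I ∪ J) = |I' ∩ J'| + n_M(I' ∪ J'), where cardinalities and nullities are valued in ℕ∞ = ℕ ∪ {∞}. (Hence the local connectivity ⊓_M(X,Y) = |I ∩ J| + n_M(I ∪ J) is well-defined, independent of the choice of bases.) -/
open Set

namespace Matroid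

variable {α : Type*} {ι : Type*}

/-! Extend a basis `I` of `X` to a basis `B` of `I ∪ J`. Then `B \ X` is a basis of `J` in
`M ／ X`, and `J \ (B \ X)` is the disjoint union of `I ∩ J` and `(I ∪ J) \ B`, so
`|I ∩ J| + n_M(I ∪ J) = n_{M ／ X}(J)` does not depend on the choice of `I`. Exchanging the
roles of `X` and `Y` removes the dependence on `J`. -/

variable {M : Matroid α} {B I J X : Set α}

lemma eRank'_eq_eRank (M : Matroid α) : M.eRank' = M.eRank := by
  refine le_antisymm (iSup_le fun I ↦ I.2.1.encard_le_eRank) ?_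
  obtain ⟨B, hB⟩ := M.exists_isBase
  exact hB.encard_eq_eRank.symm.le.trans (le_iSup_of_le ⟨B, hB.indep, hB.subset_ground⟩ le_rfl)

lemma IsBasis'.nullity_eq_encard_sdiff (hI : M.IsBasis' I X) : M.nullity X = (X \ I).encard := by
  rw [nullity, eRank'_eq_eRank, ← hI.isBase_restrict.compl_isBase_dual.encard_eq_eRank,
    restrict_ground_eq]

lemma IsBasis'.contract_isBasis'_sdiff (hI : M.IsBasis' I X) (hB : M.IsBasis' B (I ∪ J))
    (hIB : I ⊆ B) : (M ／ X).IsBasis' (B \ X) J := by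
  have h := hB.contract_isBasis' hI (hB.indep.subset (by tauto_set))
  have hIX := hI.subset
  have hground : (I ∪ J) \ X ∩ (M ／ X).E = J ∩ (M ／ X).E := by
    rw [contract_ground]
    tauto_set
  rwa [isBasis'_iff_isBasis_inter_ground, hground, ← isBasis'_iff_isBasis_inter_ground] at h

lemma IsBasis'.encard_inter_add_nullity_union (hI : M.IsBasis' I X) (J : Set α) :
    (I ∩ J).encard + M.nullity (I ∪ J) = (M ／ X).nullity J := by
  obtain ⟨B, hB, hIB⟩ := hI.indep.subset_isBasis'_of_subset (subset_union_left (t := J))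
  have hIX := hI.subset
  have hBX : B ∩ X = I := hI.inter_eq_of_subset_indep hIB hB.indep
  have hdisj : Disjoint (I ∩ J) ((I ∪ J) \ B) := by tauto_set
  have hsplit : I ∩ J ∪ (I ∪ J) \ B = J \ (B \ X) := by tauto_set
  rw [hB.nullity_eq_encard_sdiff, (hI.contract_isBasis'_sdiff hB hIB).nullity_eq_encard_sdiff,
    ← encard_union_eq hdisj, hsplit]

/-- The quantity `|I ∩ J| + n (I ∪ J)` is independent of the choice of
bases `I` for `X` and `J` for `Y`; hence local connectivity is well-defined. -/
theorem encard_inter_add_nullity_union_eq (M : Matroid α) {X Y I I' J J' : Set α}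
    (hI : M.IsBasis I X) (hI' : M.IsBasis I' X) (hJ : M.IsBasis J Y) (hJ' : M.IsBasis J' Y) :
    (I ∩ J).encard + M.nullity (I ∪ J) = (I' ∩ J').encard + M.nullity (I' ∪ J') := by
  calc (I ∩ J).encard + M.nullity (I ∪ J)
      = (I' ∩ J).encard + M.nullity (I' ∪ J) := by
        rw [hI.isBasis'.encard_inter_add_nullity_union,
          hI'.isBasis'.encard_inter_add_nullity_union]
    _ = (J ∩ I').encard + M.nullity (J ∪ I') := by rw [inter_comm, union_comm]
    _ = (J' ∩ I').encard + M.nullity (J' ∪ I') := by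
        rw [hJ.isBasis'.encard_inter_add_nullity_union,
          hJ'.isBasis'.encard_inter_add_nullity_union]
    _ = (I' ∩ J').encard + M.nullity (I' ∪ J') := by rw [inter_comm, union_comm]
end Matroid
end

section
/- Let M' be a matroid, let e be an element of M', and let M = M' \ e. Then the collection 𝓕_M^{M'} of all flats F of M with e ∈ cl_{M'}(F) is a modular cut of M. -/
open Set

namespace Matroid

variable {α : Type*} {ι : Type*}

/-! A mutual basis `B` of a modular family in `M ↾ R` meets each member `F` in a set spanning
`F` in `M`; since all the sets `F ∩ B` lie in the single independent set `B`, closure in `M`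
commutes with their intersection. Hence if `e` is spanned by every member, it is spanned by the
intersection, which gives both intersection axioms of a modular cut at once. -/

lemma IsFlat.sInter {M : Matroid α} {𝓕 : Set (Set α)} (hne : 𝓕.Nonempty)
    (h𝓕 : ∀ F ∈ 𝓕, M.IsFlat F) : M.IsFlat (⋂₀ 𝓕) := by
  have := hne.to_subtype
  rw [sInter_eq_iInter]
  exact IsFlat.iInter fun F ↦ h𝓕 F.1 F.2

lemma IsBasis.closure_eq_closure_of_restrict {M : Matroid α} {R I X : Set α}
    (h : (M ↾ R).IsBasis I X) : M.closure I = M.closure X := by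
  rw [(isBasis_restrict_iff'.1 h).1.closure_eq_closure, closure_inter_ground]

lemma IsModularSetFamily.closure_sInter_eq_biInter_closure_of_restrict {M : Matroid α}
    {R : Set α} {𝓒 : Set (Set α)} (h : (M ↾ R).IsModularSetFamily 𝓒) (hne : 𝓒.Nonempty) :
    M.closure (⋂₀ 𝓒) = ⋂ F ∈ 𝓒, M.closure F := by
  obtain ⟨B, hB, hbasis⟩ := h
  refine subset_antisymm
    (subset_iInter₂ fun F hF ↦ M.closure_subset_closure (sInter_subset_of_mem hF)) ?_
  calc ⋂ F ∈ 𝓒, M.closure F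
      = ⋂ F ∈ 𝓒, M.closure (F ∩ B) :=
        iInter₂_congr fun F hF ↦ (hbasis F hF).closure_eq_closure_of_restrict.symm
    _ = M.closure (⋂₀ ((· ∩ B) '' 𝓒)) := by
        rw [hB.of_restrict.closure_sInter_eq_biInter_closure_of_forall_subset (hne.image _)
          (by rintro _ ⟨F, -, rfl⟩; exact inter_subset_right), biInter_image]
    _ ⊆ M.closure (⋂₀ 𝓒) :=
        M.closure_subset_closure fun x hx F hF ↦ (hx _ ⟨F, hF, rfl⟩).1

lemma isModularCut_restrict_setOf_mem_closure (M : Matroid α) (R : Set α) (e : α) :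
    (M ↾ R).IsModularCut {F | (M ↾ R).IsFlat F ∧ e ∈ M.closure F} := by
  have hsInter : ∀ 𝓒 ⊆ {F | (M ↾ R).IsFlat F ∧ e ∈ M.closure F}, 𝓒.Nonempty →
      (M ↾ R).IsModularSetFamily 𝓒 → (M ↾ R).IsFlat (⋂₀ 𝓒) ∧ e ∈ M.closure (⋂₀ 𝓒) := by
    intro 𝓒 h𝓒 hne hmod
    refine ⟨IsFlat.sInter hne fun F hF ↦ (h𝓒 hF).1, ?_⟩
    rw [hmod.closure_sInter_eq_biInter_closure_of_restrict hne, mem_iInter₂]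
    exact fun F hF ↦ (h𝓒 hF).2
  refine ⟨fun F hF ↦ hF.1, fun F F' hF hF' hFF' ↦ ⟨hF', M.closure_subset_closure hFF' hF.2⟩,
    fun F F' hF hF' hmod ↦ ?_, fun 𝓒 h𝓒 hinf _ hmod ↦ hsInter 𝓒 h𝓒 hinf.nonempty hmod⟩
  rw [← sInter_pair]
  exact hsInter {F, F'} (pair_subset hF hF') (insert_nonempty _ _) hmod

theorem isModularCut_of_deletion_general (M' : Matroid α) {e : α} :
    (M'.delete' {e}).IsModularCut
      {F | (M'.delete' {e}).IsFlat F ∧ e ∈ M'.closure F} :=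
  M'.isModularCut_restrict_setOf_mem_closure _ e

/-- If `M = M' \ e`, then the collection of flats of `M` whose closure
in `M'` contains `e` is a modular cut of `M`. -/
theorem isModularCut_of_deletion (M' : Matroid α) {e : α} (he : e ∈ M'.E) :
    (M'.delete' {e}).IsModularCut
      {F | (M'.delete' {e}).IsFlat F ∧ e ∈ M'.closure F} :=
  isModularCut_of_deletion_general M'
end Matroid
end

section
/- Let 𝓕 be a modular cut in a matroid M, and let e be an element not in the ground set of M. Then there is a unique matroid M' with ground set E(M) ∪ {e} such that M' \ e = M and, for every flat F of M, e ∈ cl_{M'}(F) if and only if F ∈ 𝓕. -/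
open Set

namespace Matroid

variable {α : Type*} {ι : Type*}

/-!
Write `I₀ = I \ {e}`. In any such extension `I` is independent iff `I₀` is independent in `M`
and, when `e ∈ I`, `e ∉ cl I₀`, i.e. `cl_M I₀ ∉ 𝓕`; this gives uniqueness, and existence amounts
to checking the independence axioms for these sets. For subsets of a single independent set `J`,
`J` is a mutual basis of their closures, so `𝓕` is closed under intersecting two such closures and
under intersecting chains of them. Pairs give augmentation: if `B ∋ e` is maximal, every flat of
`𝓕` containing `B₀` is the whole ground set. Chains give, by Zorn's lemma, an element `x` of a
basis `J` with `cl (J \ {x}) ∉ 𝓕` when `cl J ∈ 𝓕`, and then `insert e (J \ {x})` is maximal.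
-/

section Extension

variable {M N : Matroid α} {𝓕 : Set (Set α)} {e x y : α} {A B I J X : Set α}

lemma Indep.isMutualBasisSet_image_closure (hJ : M.Indep J) {𝒜 : Set (Set α)}
    (h𝒜J : ∀ A ∈ 𝒜, A ⊆ J) : M.IsMutualBasisSet J (M.closure '' 𝒜) := by
  refine ⟨hJ, ?_⟩
  rintro _ ⟨A, hA, rfl⟩
  rw [hJ.closure_inter_eq_self_of_subset (h𝒜J A hA)]
  exact (hJ.subset (h𝒜J A hA)).isBasis_closure

namespace IsModularCut

lemma closure_mem_of_subset (h𝓕 : M.IsModularCut 𝓕) {F : Set α} (hF : F ∈ 𝓕)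
    (hFX : F ⊆ M.closure X) : M.closure X ∈ 𝓕 :=
  h𝓕.2.1 F _ hF (M.isFlat_closure X) hFX

lemma closure_inter_mem (h𝓕 : M.IsModularCut 𝓕) (hJ : M.Indep J) (hAJ : A ⊆ J) (hBJ : B ⊆ J)
    (hA : M.closure A ∈ 𝓕) (hB : M.closure B ∈ 𝓕) : M.closure (A ∩ B) ∈ 𝓕 := by
  have hmod := hJ.isMutualBasisSet_image_closure (𝒜 := {A, B}) (by simp [hAJ, hBJ])
  rw [image_pair] at hmod
  rw [(hJ.subset (union_subset hAJ hBJ)).closure_inter_eq_inter_closure]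
  exact h𝓕.2.2.1 _ _ hA hB ⟨J, hmod⟩

lemma sInter_mem_of_isChain (h𝓕 : M.IsModularCut 𝓕) {𝓒 : Set (Set α)} (h𝓒 : 𝓒 ⊆ 𝓕)
    (hne : 𝓒.Nonempty) (hchain : IsChain (· ⊆ ·) 𝓒) (hmod : M.IsModularSetFamily 𝓒) :
    ⋂₀ 𝓒 ∈ 𝓕 := by
  obtain hfin | hinf := 𝓒.finite_or_infinite
  · obtain ⟨F, hF⟩ := hfin.exists_minimal hne
    have hleast : ∀ G ∈ 𝓒, F ⊆ G := fun G hG ↦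
      (hchain.total hF.prop hG).elim id (hF.le_of_le hG)
    rw [(sInter_subset_of_mem hF.prop).antisymm (subset_sInter hleast)]
    exact h𝓒 hF.prop
  · exact h𝓕.2.2.2 𝓒 h𝓒 hinf hchain hmod

lemma closure_sInter_mem (h𝓕 : M.IsModularCut 𝓕) (hJ : M.Indep J) {𝒜 : Set (Set α)}
    (hne : 𝒜.Nonempty) (h𝒜J : ∀ A ∈ 𝒜, A ⊆ J) (hchain : IsChain (· ⊆ ·) 𝒜)
    (h𝒜 : ∀ A ∈ 𝒜, M.closure A ∈ 𝓕) : M.closure (⋂₀ 𝒜) ∈ 𝓕 := by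
  rw [hJ.closure_sInter_eq_biInter_closure_of_forall_subset hne h𝒜J, ← sInter_image]
  exact h𝓕.sInter_mem_of_isChain (by rintro _ ⟨A, hA, rfl⟩; exact h𝒜 A hA) (hne.image _)
    (M.closure_mono.isChain_image hchain) ⟨J, hJ.isMutualBasisSet_image_closure h𝒜J⟩

lemma closure_mem_of_closure_insert_mem (h𝓕 : M.IsModularCut 𝓕) (hxI : M.Indep (insert x I))
    (hyE : y ∈ M.E) (hy : y ∉ M.closure (insert x I)) (hx𝓕 : M.closure (insert x I) ∈ 𝓕)
    (hy𝓕 : M.closure (insert y I) ∈ 𝓕) : M.closure I ∈ 𝓕 := by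
  have hyxI : y ∉ insert x I := fun h ↦ hy (M.subset_closure _ hxI.subset_ground h)
  have hJ : M.Indep (insert y (insert x I)) :=
    (hxI.insert_indep_iff_of_notMem hyxI).2 ⟨hyE, hy⟩
  have hinter : insert x I ∩ insert y I = I := by
    ext u
    simp only [mem_inter_iff, mem_insert_iff] at hyxI ⊢
    aesop
  rw [← hinter]
  exact h𝓕.closure_inter_mem hJ (subset_insert _ _) (insert_subset_insert (subset_insert _ _))
    hx𝓕 hy𝓕

lemma exists_closure_sdiff_singleton_notMem (h𝓕 : M.IsModularCut 𝓕) (hJ : M.Indep J)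
    (hIJ : I ⊆ J) (hI : M.closure I ∉ 𝓕) (hJ𝓕 : M.closure J ∈ 𝓕) :
    ∃ x ∈ J \ I, M.closure (J \ {x}) ∉ 𝓕 := by
  obtain ⟨A, -, hA⟩ := zorn_superset_nonempty {A | I ⊆ A ∧ A ⊆ J ∧ M.closure A ∈ 𝓕}
    (fun c hc hchain hne ↦ ⟨⋂₀ c, ⟨subset_sInter fun A hA ↦ (hc hA).1,
      (sInter_subset_of_mem hne.some_mem).trans (hc hne.some_mem).2.1,
      h𝓕.closure_sInter_mem hJ hne (fun A hA ↦ (hc hA).2.1) hchain fun A hA ↦ (hc hA).2.2⟩,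
      fun _ ↦ sInter_subset_of_mem⟩) J ⟨hIJ, Subset.rfl, hJ𝓕⟩
  obtain ⟨hIA, hAJ, hA𝓕⟩ := hA.prop
  obtain ⟨x, hxA, hxI⟩ : (A \ I).Nonempty :=
    sdiff_nonempty.2 fun hAI ↦ hI (hAI.antisymm hIA ▸ hA𝓕)
  refine ⟨x, ⟨hAJ hxA, hxI⟩, fun hx𝓕 ↦ ?_⟩
  have hAx := h𝓕.closure_inter_mem hJ hAJ sdiff_subset hA𝓕 hx𝓕
  rw [← inter_sdiff_assoc, inter_eq_left.2 hAJ] at hAx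
  exact (hA.le_of_le ⟨subset_sdiff_singleton hIA hxI, sdiff_subset.trans hAJ, hAx⟩ sdiff_subset
    hxA).2 rfl

end IsModularCut

lemma exists_notMem_and_eq_or_eq_insert (e : α) (I : Set α) :
    ∃ J, e ∉ J ∧ (I = J ∨ I = insert e J) := by
  by_cases heI : e ∈ I
  · exact ⟨I \ {e}, fun h ↦ h.2 rfl,
      Or.inr (insert_sdiff_singleton.trans (insert_eq_of_mem heI)).symm⟩
  · exact ⟨I, heI, Or.inl rfl⟩

def ExtensionIndep (M : Matroid α) (𝓕 : Set (Set α)) (e : α) (I : Set α) : Prop :=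
  M.Indep (I \ {e}) ∧ (e ∈ I → M.closure (I \ {e}) ∉ 𝓕)

lemma extensionIndep_iff_of_notMem (heI : e ∉ I) : ExtensionIndep M 𝓕 e I ↔ M.Indep I := by
  simp [ExtensionIndep, sdiff_singleton_eq_self heI, heI]

lemma extensionIndep_insert_iff (heI : e ∉ I) :
    ExtensionIndep M 𝓕 e (insert e I) ↔ M.Indep I ∧ M.closure I ∉ 𝓕 := by
  simp [ExtensionIndep, insert_sdiff_self_of_notMem heI]

lemma ExtensionIndep.subset (hJ : ExtensionIndep M 𝓕 e J) (h𝓕 : M.IsModularCut 𝓕) (hIJ : I ⊆ J) :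
    ExtensionIndep M 𝓕 e I :=
  ⟨hJ.1.subset (sdiff_subset_sdiff_left hIJ), fun heI hI ↦ hJ.2 (hIJ heI)
    (h𝓕.closure_mem_of_subset hI (M.closure_subset_closure (sdiff_subset_sdiff_left hIJ)))⟩

lemma ExtensionIndep.subset_insert_ground (hI : ExtensionIndep M 𝓕 e I) : I ⊆ insert e M.E :=
  fun x hx ↦ (eq_or_ne x e).imp id fun hxe ↦ hI.1.subset_ground ⟨hx, hxe⟩

lemma maximal_extensionIndep_of_isBasis (hJ : M.IsBasis J (X \ {e}))
    (hJ𝓕 : e ∈ X → M.closure J ∈ 𝓕) :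
    Maximal (fun K ↦ ExtensionIndep M 𝓕 e K ∧ K ⊆ X) J := by
  have heJ : e ∉ J := fun h ↦ (hJ.subset h).2 rfl
  refine ⟨⟨(extensionIndep_iff_of_notMem heJ).2 hJ.indep, hJ.subset.trans sdiff_subset⟩,
    fun K hK hJK ↦ ?_⟩
  have hKJ : K \ {e} = J := (hJ.eq_of_subset_indep hK.1.1 (subset_sdiff_singleton hJK heJ)
    (sdiff_subset_sdiff_left hK.2)).symm
  have heK : e ∉ K := fun heK ↦ hK.1.2 heK (hKJ ▸ hJ𝓕 (hK.2 heK))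
  rw [← hKJ, sdiff_singleton_eq_self heK]

lemma maximal_extensionIndep_insert (heX : e ∈ X) (heJ : e ∉ J) (hJX : J ⊆ X) (hJ : M.Indep J)
    (hJ𝓕 : M.closure J ∉ 𝓕)
    (hmax : ∀ K, M.Indep K → J ⊆ K → K ⊆ X \ {e} → M.closure K ∉ 𝓕 → K ⊆ J) :
    Maximal (fun K ↦ ExtensionIndep M 𝓕 e K ∧ K ⊆ X) (insert e J) := by
  refine ⟨⟨(extensionIndep_insert_iff heJ).2 ⟨hJ, hJ𝓕⟩, insert_subset heX hJX⟩,
    fun K hK hJK ↦ ?_⟩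
  have hKJ := hmax (K \ {e}) hK.1.1 (subset_sdiff_singleton ((subset_insert e J).trans hJK) heJ)
    (sdiff_subset_sdiff_left hK.2) (hK.1.2 (hJK (mem_insert e J)))
  exact (subset_insert_sdiff_singleton e K).trans (insert_subset_insert hKJ)

/-- An independent `K ⊇ J \ {x}` inside `X \ {e}` meeting a point `y ∉ J \ {x}` spans `J`, since
`y ∈ cl J` can be exchanged for `x`; so `cl K ∈ 𝓕`. -/
lemma maximal_extensionIndep_insert_sdiff (h𝓕 : M.IsModularCut 𝓕) (hJ : M.IsBasis J (X \ {e}))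
    (heX : e ∈ X) (hJ𝓕 : M.closure J ∈ 𝓕) (hxJ : x ∈ J) (hx𝓕 : M.closure (J \ {x}) ∉ 𝓕) :
    Maximal (fun K ↦ ExtensionIndep M 𝓕 e K ∧ K ⊆ X) (insert e (J \ {x})) := by
  refine maximal_extensionIndep_insert heX (fun h ↦ (hJ.subset h.1).2 rfl)
    (sdiff_subset.trans (hJ.subset.trans sdiff_subset)) (hJ.indep.subset sdiff_subset) hx𝓕
    fun K hK hJK hKX hK𝓕 y hyK ↦ by_contra fun hyJ ↦ hK𝓕 ?_
  have hyJ' : y ∈ M.closure (insert x (J \ {x})) \ M.closure (J \ {x}) := by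
    rw [insert_sdiff_singleton, insert_eq_of_mem hxJ]
    exact ⟨hJ.subset_closure (hKX hyK), (((hJ.indep.subset sdiff_subset).insert_indep_iff_of_notMem
      hyJ).1 (hK.subset (insert_subset hyK hJK))).2⟩
  refine h𝓕.closure_mem_of_subset ?_ (M.closure_subset_closure (insert_subset hyK hJK))
  rwa [closure_insert_congr hyJ', insert_sdiff_singleton, insert_eq_of_mem hxJ]

lemma extensionIndep_existsMaximalSubsetProperty (h𝓕 : M.IsModularCut 𝓕)
    (hX : X ⊆ insert e M.E) : ExistsMaximalSubsetProperty (ExtensionIndep M 𝓕 e) X := by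
  intro I hI hIX
  obtain ⟨J, hJ, hIJ⟩ := hI.1.subset_isBasis_of_subset (sdiff_subset_sdiff_left hIX)
    fun x hx ↦ (hX hx.1).resolve_left hx.2
  have heJ : e ∉ J := fun h ↦ (hJ.subset h).2 rfl
  by_cases hJ𝓕 : e ∈ X ∧ M.closure J ∉ 𝓕
  · exact ⟨insert e J, (subset_insert_sdiff_singleton e I).trans (insert_subset_insert hIJ),
      maximal_extensionIndep_insert hJ𝓕.1 heJ (hJ.subset.trans sdiff_subset) hJ.indep hJ𝓕.2
        fun K hK hJK hKX _ ↦ (hJ.eq_of_subset_indep hK hJK hKX).symm.subset⟩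
  rw [not_and, not_not] at hJ𝓕
  by_cases heI : e ∈ I
  · obtain ⟨x, hx, hx𝓕⟩ := h𝓕.exists_closure_sdiff_singleton_notMem hJ.indep hIJ (hI.2 heI)
      (hJ𝓕 (hIX heI))
    exact ⟨insert e (J \ {x}), (subset_insert_sdiff_singleton e I).trans
      (insert_subset_insert (subset_sdiff_singleton hIJ hx.2)),
      maximal_extensionIndep_insert_sdiff h𝓕 hJ (hIX heI) (hJ𝓕 (hIX heI)) hx.1 hx𝓕⟩
  · exact ⟨J, (sdiff_singleton_eq_self heI).symm.subset.trans hIJ,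
      maximal_extensionIndep_of_isBasis hJ hJ𝓕⟩

lemma closure_insert_mem_of_maximal (he : e ∉ M.E) (hB : Maximal (ExtensionIndep M 𝓕 e) B)
    (hy : y ∈ M.E \ M.closure (B \ {e})) : e ∈ B ∧ M.closure (insert y (B \ {e})) ∈ 𝓕 := by
  have hye : y ≠ e := fun h ↦ he (h ▸ hy.1)
  have hyB : y ∉ B \ {e} := fun h ↦ hy.2 (M.subset_closure _ hB.prop.1.subset_ground h)
  by_contra hcon
  have hins : ExtensionIndep M 𝓕 e (insert y B) := by
    rw [ExtensionIndep, ← insert_sdiff_singleton_comm hye, hB.prop.1.insert_indep_iff_of_notMem hyB]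
    exact ⟨hy, fun heB h ↦ hcon ⟨(mem_insert_iff.1 heB).resolve_left hye.symm, h⟩⟩
  exact hyB ⟨hB.mem_of_prop_insert hins, hye⟩

lemma IsModularCut.ground_subset_closure_of_maximal (h𝓕 : M.IsModularCut 𝓕) (he : e ∉ M.E)
    (hB : Maximal (ExtensionIndep M 𝓕 e) B) (hX𝓕 : M.closure X ∈ 𝓕)
    (hBX : B \ {e} ⊆ M.closure X) : M.E ⊆ M.closure X := by
  intro w hwE
  by_contra hwX
  have hBX' := M.closure_subset_closure_of_subset_closure hBX
  obtain ⟨heB, hw𝓕⟩ := closure_insert_mem_of_maximal he hB ⟨hwE, fun h ↦ hwX (hBX' h)⟩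
  have hB𝓕 := hB.prop.2 heB
  obtain ⟨v, hvX, hvB⟩ := not_subset.1 fun h ↦ hB𝓕 (h𝓕.closure_mem_of_subset hX𝓕 h)
  have hvE := M.closure_subset_ground X hvX
  refine hB𝓕 (h𝓕.closure_mem_of_closure_insert_mem (hB.prop.1.insert_indep_iff.2
    (Or.inl ⟨hvE, hvB⟩)) hwE (fun h ↦ hwX ?_) (closure_insert_mem_of_maximal he hB ⟨hvE, hvB⟩).2
    hw𝓕)
  exact M.closure_subset_closure_of_subset_closure (insert_subset hvX hBX) h

lemma IsModularCut.exists_insert_extensionIndep (h𝓕 : M.IsModularCut 𝓕) (he : e ∉ M.E)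
    (heJ : e ∉ J) (hJ : M.Indep J) (hJmax : ¬ Maximal (ExtensionIndep M 𝓕 e) J)
    (hB : Maximal (ExtensionIndep M 𝓕 e) B) : ∃ x ∈ B \ J, ExtensionIndep M 𝓕 e (insert x J) := by
  by_contra! hcon
  have hBJ : B \ {e} ⊆ M.closure J := fun x hx ↦ by_contra fun hxJ ↦ by
    have hxJ' : x ∉ J := fun h ↦ hxJ (M.subset_closure J hJ.subset_ground h)
    refine hcon x ⟨hx.1, hxJ'⟩ ((extensionIndep_iff_of_notMem ?_).2
      ((hJ.insert_indep_iff_of_notMem hxJ').2 ⟨hB.prop.1.subset_ground hx, hxJ⟩))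
    rintro (h | h)
    exacts [hx.2 h.symm, heJ h]
  have hJ𝓕 : M.closure J ∈ 𝓕 := by
    by_contra hJ𝓕
    by_cases heB : e ∈ B
    · exact hcon e ⟨heB, heJ⟩ ((extensionIndep_insert_iff heJ).2 ⟨hJ, hJ𝓕⟩)
    · have hBind : M.Indep B := (extensionIndep_iff_of_notMem heB).1 hB.prop
      rw [sdiff_singleton_eq_self heB] at hBJ
      refine heB (hB.mem_of_prop_insert ((extensionIndep_insert_iff heB).2 ⟨hBind, fun hB𝓕 ↦ ?_⟩))
      exact hJ𝓕 (h𝓕.closure_mem_of_subset hB𝓕 (M.closure_subset_closure_of_subset_closure hBJ))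
  have hJbase : M.IsBase J :=
    hJ.isBase_of_ground_subset_closure (h𝓕.ground_subset_closure_of_maximal he hB hJ𝓕 hBJ)
  refine hJmax ((maximal_and_iff_right_of_imp fun _ hK ↦ hK.subset_insert_ground).1
    (maximal_extensionIndep_of_isBasis (X := insert e M.E) ?_ fun _ ↦ hJ𝓕)).1
  rwa [insert_sdiff_self_of_notMem he, isBasis_ground_iff]

lemma IsModularCut.exists_insert_extensionIndep_insert (h𝓕 : M.IsModularCut 𝓕) (he : e ∉ M.E)
    (heJ : e ∉ J) (hJ : M.Indep J) (hJ𝓕 : M.closure J ∉ 𝓕)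
    (hJmax : ¬ Maximal (ExtensionIndep M 𝓕 e) (insert e J))
    (hB : Maximal (ExtensionIndep M 𝓕 e) B) :
    ∃ x ∈ B \ insert e J, ExtensionIndep M 𝓕 e (insert x (insert e J)) := by
  obtain ⟨K, hJK, hK⟩ :=
    (not_maximal_iff_exists_gt ((extensionIndep_insert_iff heJ).2 ⟨hJ, hJ𝓕⟩)).1 hJmax
  obtain ⟨z, hzK, hzJ⟩ := exists_of_ssubset hJK
  have hze : z ≠ e := fun h ↦ hzJ (h ▸ mem_insert e J)
  have hzJ' : z ∉ J := fun h ↦ hzJ (mem_insert_of_mem e h)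
  have hz := hK.subset h𝓕 (insert_subset hzK hJK.subset)
  rw [insert_comm, extensionIndep_insert_iff fun h ↦ (mem_insert_iff.1 h).elim hze.symm heJ,
    hJ.insert_indep_iff_of_notMem hzJ'] at hz
  obtain ⟨⟨hzE, hzcl⟩, hz𝓕⟩ := hz
  by_contra! hcon
  have hcon' : ∀ x ∈ B \ {e}, x ∉ M.closure J → M.closure (insert x J) ∈ 𝓕 := by
    intro x hx hxJ
    have hxJ' : x ∉ J := fun h ↦ hxJ (M.subset_closure J hJ.subset_ground h)
    by_contra hx𝓕
    refine hcon x ⟨hx.1, fun h ↦ (mem_insert_iff.1 h).elim hx.2 hxJ'⟩ ?_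
    rw [insert_comm, extensionIndep_insert_iff fun h ↦ (mem_insert_iff.1 h).elim
      (fun h ↦ hx.2 h.symm) heJ, hJ.insert_indep_iff_of_notMem hxJ']
    exact ⟨⟨hB.prop.1.subset_ground hx, hxJ⟩, hx𝓕⟩
  by_cases hBJ : B \ {e} ⊆ M.closure J
  · have hzB : z ∉ M.closure (B \ {e}) :=
      fun h ↦ hzcl (M.closure_subset_closure_of_subset_closure hBJ h)
    refine hz𝓕 (h𝓕.closure_mem_of_subset (closure_insert_mem_of_maximal he hB ⟨hzE, hzB⟩).2
      (M.closure_subset_closure_of_subset_closure (insert_subset ?_ ?_)))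
    · exact M.subset_closure _ (insert_subset hzE hJ.subset_ground) (mem_insert z J)
    · exact hBJ.trans (M.closure_subset_closure (subset_insert z J))
  obtain ⟨x, hxB, hxJ⟩ := not_subset.1 hBJ
  have hx𝓕 := hcon' x hxB hxJ
  have hxind : M.Indep (insert x J) :=
    hJ.insert_indep_iff.2 (Or.inl ⟨hB.prop.1.subset_ground hxB, hxJ⟩)
  have hBx : B \ {e} ⊆ M.closure (insert x J) := fun y hyB ↦ by_contra fun hyx ↦
    hJ𝓕 (h𝓕.closure_mem_of_closure_insert_mem hxind (hB.prop.1.subset_ground hyB) hyx hx𝓕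
      (hcon' y hyB fun h ↦ hyx (M.closure_subset_closure (subset_insert x J) h)))
  have hzx : z ∈ M.closure (insert x J) \ M.closure J :=
    ⟨h𝓕.ground_subset_closure_of_maximal he hB hx𝓕 hBx hzE, hzcl⟩
  exact hz𝓕 (closure_insert_congr hzx ▸ hx𝓕)

lemma ExtensionIndep.exists_insert_of_not_maximal (hI : ExtensionIndep M 𝓕 e I)
    (h𝓕 : M.IsModularCut 𝓕) (he : e ∉ M.E) (hImax : ¬ Maximal (ExtensionIndep M 𝓕 e) I)
    (hB : Maximal (ExtensionIndep M 𝓕 e) B) : ∃ x ∈ B \ I, ExtensionIndep M 𝓕 e (insert x I) := by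
  obtain ⟨J, heJ, rfl | rfl⟩ := exists_notMem_and_eq_or_eq_insert e I
  · exact h𝓕.exists_insert_extensionIndep he heJ ((extensionIndep_iff_of_notMem heJ).1 hI) hImax hB
  · obtain ⟨hJ, hJ𝓕⟩ := (extensionIndep_insert_iff heJ).1 hI
    exact h𝓕.exists_insert_extensionIndep_insert he heJ hJ hJ𝓕 hImax hB

def IsModularCut.extension (h𝓕 : M.IsModularCut 𝓕) (he : e ∉ M.E) : Matroid α :=
  IndepMatroid.matroid
    { E := insert e M.E
      Indep := ExtensionIndep M 𝓕 e
      indep_empty := (extensionIndep_iff_of_notMem (notMem_empty e)).2 M.empty_indep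
      indep_subset := fun _ _ hJ hIJ ↦ hJ.subset h𝓕 hIJ
      indep_aug := fun _ _ hI hImax hB ↦ hI.exists_insert_of_not_maximal h𝓕 he hImax hB
      indep_maximal := fun _ hX ↦ extensionIndep_existsMaximalSubsetProperty h𝓕 hX
      subset_ground := fun _ hI ↦ hI.subset_insert_ground }

lemma IsModularCut.extension_indep_iff (h𝓕 : M.IsModularCut 𝓕) (he : e ∉ M.E) :
    (h𝓕.extension he).Indep I ↔ ExtensionIndep M 𝓕 e I :=
  IndepMatroid.matroid_indep_iff

lemma indep_iff_of_restrict_eq (hNM : N ↾ M.E = M) (hNE : N.E = insert e M.E) (heI : e ∉ I) :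
    N.Indep I ↔ M.Indep I := by
  rw [← hNM, restrict_indep_iff, iff_self_and]
  exact fun hI x hx ↦ ((hNE ▸ hI.subset_ground hx : x ∈ insert e M.E)).resolve_left
    fun h ↦ heI (h ▸ hx)

lemma closure_closure_of_restrict_eq (hNM : N ↾ M.E = M) (hNE : N.E = insert e M.E)
    (hX : X ⊆ M.E) : N.closure (M.closure X) = N.closure X := by
  have hME : M.E ⊆ N.E := hNE ▸ subset_insert e M.E
  rw [← hNM, restrict_closure_eq N hX hME]
  exact (N.closure_subset_closure_of_subset_closure inter_subset_left).antisymm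
    (N.closure_subset_closure (subset_inter (N.subset_closure X (hX.trans hME)) hX))

lemma insert_indep_iff_of_restrict_eq (hNM : N ↾ M.E = M) (hNE : N.E = insert e M.E)
    (heI : e ∉ I) : N.Indep (insert e I) ↔ M.Indep I ∧ e ∉ N.closure (M.closure I) := by
  rw [insert_indep_iff, indep_iff_of_restrict_eq hNM hNE heI]
  refine and_congr_right fun hI ↦ ?_
  rw [closure_closure_of_restrict_eq hNM hNE hI.subset_ground, hNE]
  simp [heI]

lemma forall_indep_iff_extensionIndep_iff (he : e ∉ M.E) (hNE : N.E = insert e M.E) :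
    (∀ I, N.Indep I ↔ ExtensionIndep M 𝓕 e I) ↔
      N.delete' {e} = M ∧ ∀ F, M.IsFlat F → (e ∈ N.closure F ↔ F ∈ 𝓕) := by
  rw [delete', hNE, insert_sdiff_self_of_notMem he]
  refine ⟨fun hN ↦ ?_, fun ⟨hNM, hN𝓕⟩ I ↦ ?_⟩
  · have hNM : N ↾ M.E = M := by
      refine ext_indep rfl fun I hI ↦ ?_
      rw [restrict_indep_iff, hN, extensionIndep_iff_of_notMem fun h ↦ he (hI h)]
      exact and_iff_left hI
    refine ⟨hNM, fun F hF ↦ ?_⟩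
    obtain ⟨I, hI⟩ := M.exists_isBasis F
    have heI : e ∉ I := fun h ↦ he (hI.indep.subset_ground h)
    have hIe : e ∉ N.closure (M.closure I) ↔ M.closure I ∉ 𝓕 := by
      simpa [hI.indep] using (insert_indep_iff_of_restrict_eq hNM hNE heI).symm.trans
        ((hN _).trans (extensionIndep_insert_iff heI))
    rw [← hF.closure, ← hI.closure_eq_closure]
    exact not_iff_not.1 hIe
  · obtain ⟨J, heJ, rfl | rfl⟩ := exists_notMem_and_eq_or_eq_insert e I
    · rw [indep_iff_of_restrict_eq hNM hNE heJ, extensionIndep_iff_of_notMem heJ]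
    · rw [insert_indep_iff_of_restrict_eq hNM hNE heJ, extensionIndep_insert_iff heJ,
        hN𝓕 _ (M.isFlat_closure J)]

end Extension

/-- For every modular cut `𝓕` of `M` and element `e ∉ E(M)`, there is a
unique matroid `M'` on `E(M) ∪ {e}` with `M' \ e = M` in which the flats of `M`
spanning `e` are precisely the members of `𝓕`. -/
theorem existsUnique_extension_of_isModularCut (M : Matroid α) {𝓕 : Set (Set α)}
    (h𝓕 : M.IsModularCut 𝓕) {e : α} (he : e ∉ M.E) :
    ∃! M' : Matroid α, M'.E = insert e M.E ∧ M'.delete' {e} = M ∧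
      ∀ F, M.IsFlat F → (e ∈ M'.closure F ↔ F ∈ 𝓕) := by
  refine ⟨h𝓕.extension he, ⟨rfl, (forall_indep_iff_extensionIndep_iff he rfl).1
    fun _ ↦ h𝓕.extension_indep_iff he⟩, ?_⟩
  rintro N ⟨hNE, hN⟩
  refine ext_indep hNE fun I _ ↦ ?_
  rw [(forall_indep_iff_extensionIndep_iff he hNE).2 hN I, h𝓕.extension_indep_iff he]
end Matroid
end

section
/- Let N be a quotient of a matroid M such that M and N have a common basis. If N is finitary or M* is finitary, then M = N. -/
open Set

namespace Matroid

variable {α : Type*} {ι : Type*}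

/-!
A quotient `N` of `M` has two transfer properties: `N`-independent sets are `M`-independent and
`M`-spanning sets are `N`-spanning. Let `B` be a common base and `B₁` an `M`-base with `B₁ \ B`
finite. Then `B₁` contains an `N`-base `B₂`, and comparing the exchange counts
`|B \ B₁| = |B₁ \ B|` (in `M`) and `|B \ B₂| = |B₂ \ B|` (in `N`) forces `B₂ = B₁`. If `N` is
finitary, a finite subset `J` of an `M`-base lies in an `M`-base contained in `J ∪ B`, hence is
`N`-independent; so every `M`-base is an `N`-base, and `M = N`. Both transfer properties pass from
`(N, M)` to `(M✶, N✶)`, which handles the case that `M✶` is finitary.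
-/

theorem _root_.Set.eq_of_subset_of_encard_sdiff_comm {B B₁ B₂ : Set α} (h₂₁ : B₂ ⊆ B₁)
    (hfin : (B₁ \ B).Finite) (h₁ : (B \ B₁).encard = (B₁ \ B).encard)
    (h₂ : (B \ B₂).encard = (B₂ \ B).encard) : B₂ = B₁ := by
  have hle₁ : (B₂ \ B).encard ≤ (B₁ \ B).encard := encard_le_encard (sdiff_subset_sdiff_left h₂₁)
  have hle₂ : (B \ B₁).encard ≤ (B \ B₂).encard := encard_le_encard (sdiff_subset_sdiff_right h₂₁)
  have hdiff : (B \ B₂).encard = (B₁ \ B).encard :=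
    le_antisymm (h₂.trans_le hle₁) (h₁ ▸ hle₂)
  have hout : B₂ \ B = B₁ \ B :=
    hfin.eq_of_subset_of_encard_le' (sdiff_subset_sdiff_left h₂₁) (h₂ ▸ hdiff).ge
  have hin : B \ B₁ = B \ B₂ := by
    refine Finite.eq_of_subset_of_encard_le' ?_ (sdiff_subset_sdiff_right h₂₁)
      (hdiff.trans h₁.symm).le
    rwa [← encard_lt_top_iff, hdiff, encard_lt_top_iff]
  refine h₂₁.antisymm fun x hx ↦ ?_
  by_cases hxB : x ∈ B
  · by_contra hx₂
    exact (hin.symm.subset ⟨hxB, hx₂⟩).2 hx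
  · exact (hout.symm.subset ⟨hx, hxB⟩).1

section

variable {M N : Matroid α} {B I S : Set α}

lemma IsQuotient.indep_of_indep (hQ : N.IsQuotient M) (hI : N.Indep I) : M.Indep I := by
  rw [indep_iff_forall_notMem_closure_sdiff (hI.subset_ground.trans hQ.1.subset)]
  exact fun e he hecl ↦ hI.notMem_closure_sdiff_of_mem he (hQ.2 _ hecl)

lemma IsQuotient.spanning_of_spanning (hQ : N.IsQuotient M) (hS : M.Spanning S) :
    N.Spanning S := by
  rw [spanning_iff_ground_subset_closure (hQ.1 ▸ hS.subset_ground), hQ.1, ← hS.closure_eq]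
  exact hQ.2 S

lemma indep_dual_of_forall_spanning (hE : N.E = M.E) (hs : ∀ ⦃S⦄, M.Spanning S → N.Spanning S)
    (hI : M✶.Indep I) : N✶.Indep I := by
  have hIE : I ⊆ M.E := hI.subset_ground
  rw [← coindep_def, coindep_iff_compl_spanning (hE ▸ hIE), hE]
  exact hs ((coindep_iff_compl_spanning hIE).1 hI)

lemma spanning_dual_of_forall_indep (hE : N.E = M.E) (hi : ∀ ⦃I⦄, N.Indep I → M.Indep I)
    (hS : N✶.Spanning S) : M✶.Spanning S := by
  have hSE : S ⊆ M.E := hE ▸ hS.subset_ground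
  have hNS : N.Indep (N.E \ S) := by simpa using hS.compl_coindep
  rw [spanning_iff_compl_coindep (M := M✶) hSE, dual_coindep_iff, dual_ground, ← hE]
  exact hi hNS

lemma isBase_of_isBase_of_finite_sdiff (hs : ∀ ⦃S⦄, M.Spanning S → N.Spanning S)
    (hBM : M.IsBase B) (hBN : N.IsBase B) {B₁ : Set α} (hB₁ : M.IsBase B₁)
    (hfin : (B₁ \ B).Finite) : N.IsBase B₁ := by
  obtain ⟨B₂, hB₂, h₂₁⟩ := (hs hB₁.spanning).exists_isBase_subset
  rwa [← eq_of_subset_of_encard_sdiff_comm h₂₁ hfin (hBM.encard_sdiff_comm hB₁)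
    (hBN.encard_sdiff_comm hB₂)]

lemma indep_of_isBase_of_finitary [N.Finitary] (hs : ∀ ⦃S⦄, M.Spanning S → N.Spanning S)
    (hBM : M.IsBase B) (hBN : N.IsBase B) {B₁ : Set α} (hB₁ : M.IsBase B₁) : N.Indep B₁ := by
  refine indep_of_forall_finite_subset_indep _ fun J hJ hJfin ↦ ?_
  obtain ⟨B₂, hB₂, hJB₂, hB₂J⟩ := (hB₁.indep.subset hJ).exists_isBase_subset_union_isBase hBM
  have hfin : (B₂ \ B).Finite := hJfin.subset (by rwa [sdiff_subset_iff, union_comm])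
  exact (isBase_of_isBase_of_finite_sdiff hs hBM hBN hB₂ hfin).indep.subset hJB₂

lemma eq_of_common_isBase_of_finitary [N.Finitary] (hE : N.E = M.E)
    (hi : ∀ ⦃I⦄, N.Indep I → M.Indep I) (hs : ∀ ⦃S⦄, M.Spanning S → N.Spanning S)
    (hBM : M.IsBase B) (hBN : N.IsBase B) : M = N := by
  have hMN : ∀ ⦃B₁⦄, M.IsBase B₁ → N.IsBase B₁ := fun _ hB₁ ↦
    (indep_of_isBase_of_finitary hs hBM hBN hB₁).isBase_of_spanning (hs hB₁.spanning)
  refine ext_isBase hE.symm fun B₁ _ ↦ ⟨fun hB₁ ↦ hMN hB₁, fun hB₁ ↦ ?_⟩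
  obtain ⟨B₂, hB₂, h₁₂⟩ := (hi hB₁.indep).exists_isBase_superset
  rwa [hB₁.eq_of_subset_isBase (hMN hB₂) h₁₂]

end

/-- If `N` is a quotient of `M`, with `N` finitary or `M✶` finitary,
and `M` and `N` have a common base, then `M = N`. -/
theorem eq_of_isQuotient_of_common_base (M N : Matroid α) (hQ : N.IsQuotient M)
    (hfin : N.Finitary ∨ M✶.Finitary) {B : Set α} (hBM : M.IsBase B) (hBN : N.IsBase B) :
    M = N := by
  have hE : N.E = M.E := hQ.1
  have hi : ∀ ⦃I⦄, N.Indep I → M.Indep I := fun _ ↦ hQ.indep_of_indep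
  have hs : ∀ ⦃S⦄, M.Spanning S → N.Spanning S := fun _ ↦ hQ.spanning_of_spanning
  rcases hfin with hN | hM
  · exact eq_of_common_isBase_of_finitary hE hi hs hBM hBN
  · exact (dual_inj.1 (eq_of_common_isBase_of_finitary (M := N✶) (N := M✶) (by simp [hE])
      (fun _ ↦ indep_dual_of_forall_spanning hE hs) (fun _ ↦ spanning_dual_of_forall_indep hE hi)
      hBN.compl_isBase_dual (hE ▸ hBM.compl_isBase_dual))).symm
end Matroid
end

section
/- Let ⟨X_a : a ∈ A⟩ be a family of subsets of the ground set of a matroid M with ⋃_{a ∈ A} X_a = E(M). Then the collection of all flats F of M such that the family ⟨X_a − F : a ∈ A⟩ is skew in the contraction M / F is a modular cut of M. -/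
open Set

namespace Matroid

variable {α : Type*} {ι : Type*}

/-!
Fix a base `B` of `M` with `F ∩ B` a basis of the flat `F`. In a skew family covering the ground
set every base is a mutual basis (each member and the union of the others form a skew pair, and
bases of the two sides of a skew pair are independent together). Applied in `M ／ F` to the base
`B \ F`, this shows that `(X i \ F)` is skew in `M ／ F` exactly when `X i ∩ X j ⊆ F` for `i ≠ j`
and every `X i` is spanned by `(F ∪ X i) ∩ B`. Both conditions grow with `F`. A modular family of
flats has one base `B` adapted to all its members, and the closure of an intersection of subsets of
`B` is the intersection of their closures, so both conditions pass to the intersection.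
-/

lemma contract'_eq_contract (M : Matroid α) (C : Set α) : M.contract' C = M ／ C := rfl

section Skew

variable {M : Matroid α} {A A' B C D I J X : Set α}

lemma IsBasis.union_indep_of_isBasis (hI : M.IsBasis I X) (hJ : M.IsBasis J X)
    (hDX : Disjoint D X) (hDI : M.Indep (D ∪ I)) : M.Indep (D ∪ J) :=
  (hJ.contract_indep_iff.1 (hI.contract_indep_iff.2 ⟨hDI, hDX.symm⟩)).1

lemma Indep.union_indep_of_skew (hC : M.Indep C) (hA : M.IsBasis (A ∩ C) A)
    (hA' : M.IsBasis (A' ∩ C) A') (hAA' : A ∩ A' ⊆ M.loops) (hI : M.IsBasis I A)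
    (hJ : M.IsBasis J A') : M.Indep (I ∪ J) := by
  have hnotMem {K : Set α} (hK : M.Indep K) {x : α} (hxK : x ∈ K) (hxA : x ∈ A) : x ∉ A' :=
    fun hxA' ↦ hK.disjoint_loops.notMem_of_mem_left hxK (hAA' ⟨hxA, hxA'⟩)
  -- Swap `A ∩ C` for `I` inside `C`, then swap `A' ∩ C` for `J`.
  have h₁ : M.Indep ((C \ A) ∪ I) :=
    (inter_comm A C ▸ hA).union_indep_of_isBasis hI disjoint_sdiff_left
      (by rwa [sdiff_union_inter])
  have h₂ : M.Indep ((((C \ A) ∪ I) \ A') ∪ J) := by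
    refine hA'.union_indep_of_isBasis hJ disjoint_sdiff_left (h₁.subset ?_)
    exact union_subset sdiff_subset fun x hx ↦
      .inl ⟨hx.2, fun hxA ↦ hnotMem hC hx.2 hxA hx.1⟩
  exact h₂.subset (union_subset_union_left _ fun x hx ↦
    ⟨.inr hx, hnotMem hI.indep hx (hI.subset hx)⟩)

lemma IsBase.inter_isBasis_of_skew (hB : M.IsBase B) (hC : M.Indep C)
    (hA : M.IsBasis (A ∩ C) A) (hA' : M.IsBasis (A' ∩ C) A') (hAA' : A ∩ A' ⊆ M.loops)
    (hE : A ∪ A' = M.E) : M.IsBasis (A ∩ B) A := by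
  obtain ⟨I, hI, hBI⟩ := (hB.indep.inter_left A).subset_isBasis_of_subset inter_subset_left
    (hE ▸ subset_union_left)
  obtain ⟨J, hJ, hBJ⟩ := (hB.indep.inter_left A').subset_isBasis_of_subset inter_subset_left
    (hE ▸ subset_union_right)
  have hBIJ : B ⊆ I ∪ J := by
    intro x hxB
    obtain hxA | hxA' := hE.symm ▸ hB.subset_ground hxB
    exacts [.inl (hBI ⟨hxA, hxB⟩), .inr (hBJ ⟨hxA', hxB⟩)]
  have hBeq : B = I ∪ J := hB.eq_of_subset_indep (hC.union_indep_of_skew hA hA' hAA' hI hJ) hBIJ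
  rwa [subset_antisymm hBI (subset_inter hI.subset (hBeq ▸ subset_union_left))]

lemma IsSkewFamily.isMutualBasis_of_isBase {Y : ι → Set α} (h : M.IsSkewFamily Y)
    (hu : ⋃ i, Y i = M.E) (hB : M.IsBase B) : M.IsMutualBasis B Y := by
  obtain ⟨⟨C, hC, hCY⟩, hY⟩ := h
  refine ⟨hB.indep, fun j ↦ hB.inter_isBasis_of_skew hC (hCY j) (A' := ⋃ (i) (_ : i ≠ j), Y i)
    ?_ ?_ ?_⟩
  · refine (hC.inter_left _).isBasis_of_subset_of_subset_closure inter_subset_left ?_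
    exact iUnion₂_subset fun i hij ↦ (hCY i).subset_closure.trans
      (M.closure_subset_closure (inter_subset_inter_left _ (subset_biUnion_of_mem hij)))
  · rw [inter_iUnion₂]
    exact iUnion₂_subset fun i hij ↦ hY (Ne.symm hij)
  · refine subset_antisymm (union_subset (hu ▸ subset_iUnion Y j)
      (iUnion₂_subset fun i _ ↦ hu ▸ subset_iUnion Y i)) (hu ▸ iUnion_subset fun i ↦ ?_)
    obtain rfl | hij := eq_or_ne i j
    exacts [subset_union_left, subset_union_of_subset_right (subset_biUnion_of_mem hij) _]

end Skew

section Modular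

variable {M : Matroid α} {X Y : Set α} {𝓧 : Set (Set α)}

lemma IsModularSetFamily.exists_isBase (h : M.IsModularSetFamily 𝓧) :
    ∃ B, M.IsBase B ∧ M.IsMutualBasisSet B 𝓧 := by
  obtain ⟨I, h⟩ := h
  obtain ⟨B, hB, hIB⟩ := h.1.exists_isBase_superset
  refine ⟨B, hB, hB.indep, fun X hX ↦ ?_⟩
  rw [inter_comm, (h.2 X hX).inter_eq_of_subset_indep (inter_subset_right.trans hIB) hB.indep]
  exact h.2 X hX

lemma isModularPair_of_subset (hXY : X ⊆ Y) (hY : Y ⊆ M.E) : M.IsModularPair X Y := by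
  obtain ⟨I, hI⟩ := M.exists_isBasis X (hXY.trans hY)
  obtain ⟨J, hJ, hIJ⟩ := hI.indep.subset_isBasis_of_subset (hI.subset.trans hXY) hY
  refine ⟨J, hJ.indep, ?_⟩
  rintro Z (rfl | rfl)
  · rwa [inter_comm, hI.inter_eq_of_subset_indep hIJ hJ.indep]
  · rwa [inter_eq_self_of_subset_right hJ.subset]

end Modular

section Guts

variable {M : Matroid α} {B F F' : Set α} {X : ι → Set α}

lemma IsBase.sdiff_isBase_contract (hB : M.IsBase B) (hBF : M.IsBasis (F ∩ B) F) :
    (M ／ F).IsBase (B \ F) := by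
  refine Indep.isBase_of_ground_subset_closure ?_ ?_
  · rw [inter_comm] at hBF
    rw [hBF.contract_indep_iff, sdiff_union_inter]
    exact ⟨hB.indep, disjoint_sdiff_right⟩
  · rw [contract_closure_eq, sdiff_union_self, contract_ground]
    exact sdiff_subset_sdiff_left (hB.closure_eq ▸ M.closure_subset_closure subset_union_left)

lemma isSkewFamily_contract_iff (hu : ⋃ i, X i = M.E) (hF : M.IsFlat F) (hB : M.IsBase B)
    (hBF : M.IsBasis (F ∩ B) F) :
    (M ／ F).IsSkewFamily (fun i ↦ X i \ F) ↔
      (∀ i j, i ≠ j → X i ∩ X j ⊆ F) ∧ ∀ i, X i ⊆ M.closure ((F ∪ X i) ∩ B) := by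
  have hcl (i : ι) :
      (M ／ F).closure ((X i \ F) ∩ (B \ F)) = M.closure ((F ∪ X i) ∩ B) \ F := by
    have hset : (X i \ F) ∩ (B \ F) ∪ F = (X i ∩ B) ∪ M.closure (F ∩ B) := by
      rw [hBF.closure_eq_closure, hF.closure]
      ext; simp only [mem_union, mem_inter_iff, mem_sdiff]; tauto
    rw [contract_closure_eq, hset, closure_union_closure_right_eq, union_inter_distrib_right,
      union_comm]
  have hF_sub (i : ι) : F ⊆ M.closure ((F ∪ X i) ∩ B) :=
    hBF.subset_closure.trans (M.closure_subset_closure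
      (inter_subset_inter_left _ subset_union_left))
  have hspan_iff (i : ι) :
      X i \ F ⊆ M.closure ((F ∪ X i) ∩ B) \ F ↔ X i ⊆ M.closure ((F ∪ X i) ∩ B) := by
    rw [subset_sdiff, and_iff_left disjoint_sdiff_left, sdiff_subset_iff,
      union_eq_self_of_subset_left (hF_sub i)]
  have hloops : (M ／ F).closure ∅ = ∅ := by
    rw [contract_closure_eq, empty_union, hF.closure, Set.sdiff_self]
  constructor
  · intro h
    refine ⟨fun i j hij x hx ↦ by_contra fun hxF ↦ ?_, fun i ↦ ?_⟩
    · exact notMem_empty x (hloops ▸ h.2 hij ⟨⟨hx.1, hxF⟩, hx.2, hxF⟩)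
    have hu' : ⋃ i, X i \ F = (M ／ F).E := by rw [← iUnion_sdiff, hu, contract_ground]
    rw [← hspan_iff, ← hcl]
    exact ((h.isMutualBasis_of_isBase hu' (hB.sdiff_isBase_contract hBF)).2 i).subset_closure
  · rintro ⟨hdisj, hspan⟩
    have hBF' := (hB.sdiff_isBase_contract hBF).indep
    refine ⟨⟨B \ F, hBF', fun i ↦ ?_⟩, fun i j hij x hx ↦ ?_⟩
    · refine (hBF'.inter_left _).isBasis_of_subset_of_subset_closure inter_subset_left ?_
      rw [hcl, hspan_iff]
      exact hspan i
    · exact (hx.1.2 (hdisj i j hij ⟨hx.1.1, hx.2.1⟩)).elim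

lemma isSkewFamily_contract_of_subset (hu : ⋃ i, X i = M.E) (hF : M.IsFlat F)
    (hFX : (M ／ F).IsSkewFamily (fun i ↦ X i \ F)) (hF' : M.IsFlat F') (hFF' : F ⊆ F') :
    (M ／ F').IsSkewFamily (fun i ↦ X i \ F') := by
  obtain ⟨B, hB, -, hBFF'⟩ := (isModularPair_of_subset hFF' hF'.subset_ground).exists_isBase
  obtain ⟨hdisj, hspan⟩ := (isSkewFamily_contract_iff hu hF hB (hBFF' F (by simp))).1 hFX
  refine (isSkewFamily_contract_iff hu hF' hB (hBFF' F' (by simp))).2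
    ⟨fun i j hij ↦ (hdisj i j hij).trans hFF', fun i ↦ (hspan i).trans ?_⟩
  exact M.closure_subset_closure (inter_subset_inter_left _ (union_subset_union_left _ hFF'))

lemma Indep.closure_biInter_inter (hB : M.Indep B) {𝓒 : Set (Set α)} (h𝓒 : 𝓒.Nonempty)
    (S : Set α → Set α) : M.closure ((⋂ F ∈ 𝓒, S F) ∩ B) = ⋂ F ∈ 𝓒, M.closure (S F ∩ B) := by
  have := h𝓒.to_subtype
  rw [biInter_eq_iInter, biInter_eq_iInter, iInter_inter]
  exact closure_iInter_eq_iInter_closure_of_iUnion_indep _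
    (hB.subset (iUnion_subset fun _ ↦ inter_subset_right))

lemma isSkewFamily_contract_sInter (hu : ⋃ i, X i = M.E) {𝓒 : Set (Set α)} (h𝓒 : 𝓒.Nonempty)
    (hflat : ∀ F ∈ 𝓒, M.IsFlat F) (hskew : ∀ F ∈ 𝓒, (M ／ F).IsSkewFamily (fun i ↦ X i \ F))
    (hmod : M.IsModularSetFamily 𝓒) :
    M.IsFlat (⋂₀ 𝓒) ∧ (M ／ ⋂₀ 𝓒).IsSkewFamily (fun i ↦ X i \ ⋂₀ 𝓒) := by
  obtain ⟨B, hB, -, hB𝓒⟩ := hmod.exists_isBase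
  have hG : M.IsFlat (⋂₀ 𝓒) := by
    have := h𝓒.to_subtype
    rw [sInter_eq_iInter]
    exact IsFlat.iInter fun F ↦ hflat F F.2
  have hBG : M.IsBasis (⋂₀ 𝓒 ∩ B) (⋂₀ 𝓒) := by
    refine (hB.indep.inter_left _).isBasis_of_subset_of_subset_closure inter_subset_left ?_
    rw [sInter_eq_biInter]
    exact (iInter₂_mono fun F hF ↦ (hB𝓒 F hF).subset_closure).trans
      (hB.indep.closure_biInter_inter h𝓒 id).superset
  have hchar (F) (hF : F ∈ 𝓒) :=
    (isSkewFamily_contract_iff hu (hflat F hF) hB (hB𝓒 F hF)).1 (hskew F hF)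
  refine ⟨hG, (isSkewFamily_contract_iff hu hG hB hBG).2
    ⟨fun i j hij ↦ subset_sInter fun F hF ↦ (hchar F hF).1 i j hij, fun i ↦ ?_⟩⟩
  rw [sInter_eq_biInter, iInter₂_union]
  exact (subset_iInter₂ fun F hF ↦ (hchar F hF).2 i).trans
    (hB.indep.closure_biInter_inter h𝓒 (· ∪ X i)).superset

end Guts

/-- If the sets `X i` cover the ground set of `M`, then the collection
of flats `F` of `M` such that the family of sets `X i \ F` is skew in `M / F`
is a modular cut of `M`. -/
theorem isModularCut_guts (M : Matroid α) (X : ι → Set α) (hu : ⋃ i, X i = M.E) :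
    M.IsModularCut
      {F | M.IsFlat F ∧ (M.contract' F).IsSkewFamily (fun i ↦ X i \ F)} := by
  simp only [contract'_eq_contract]
  refine ⟨fun F hF ↦ hF.1, ?_, fun F F' hF hF' hFF' ↦ ?_, fun 𝓒 h𝓒 h𝓒inf _ hmod ↦ ?_⟩
  · rintro F F' ⟨hF, hFX⟩ hF' hFF'
    exact ⟨hF', isSkewFamily_contract_of_subset hu hF hFX hF' hFF'⟩
  · simpa only [sInter_pair, mem_ofPred_eq] using isSkewFamily_contract_sInter hu
      (insert_nonempty F {F'}) (by simp [hF.1, hF'.1]) (by simp [hF.2, hF'.2]) hFF'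
  · exact isSkewFamily_contract_sInter hu h𝓒inf.nonempty (fun F hF ↦ (h𝓒 hF).1)
      (fun F hF ↦ (h𝓒 hF).2) hmod

end Matroid
end

section
/- Let F be a flat of a matroid M. Then F is a modular flat of M if and only if for every pair of flats G₁, G₂ of M with G₁ ⊆ G₂, one has cl_M(G₁ ∪ F) ∩ G₂ = cl_M(G₁ ∪ (F ∩ G₂)). -/
open Set

namespace Matroid

variable {α : Type*} {ι : Type*}

/-! A mutual basis `B` of `F` and `G₂` reduces the law to independent sets `I = F ∩ B` and
`J = G₂ ∩ B`. Extend a basis `J₀` of `G₁ ∪ (I ∩ J)` to a basis `J₁` of `cl J`; then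
`(I \ cl J) ∪ J₁` is still independent, because for every basis `J'` of `cl J`, independence of
`(I \ cl J) ∪ J'` means independence of `I \ cl J` in `M ／ cl J`. For an independent set the
closure of an intersection of two parts is the intersection of their closures, and this cuts
`cl (G₁ ∪ F) ∩ G₂` down to `cl J₀`.
Conversely, take a basis `W` of `F ∪ G` extending a basis of `F` that extends a basis of `F ∩ G`;
the law for `G₁ = cl (G ∩ W)` shows that `G ∩ W` spans `G`, so `W` is a mutual basis. -/

section

variable {M : Matroid α}

lemma IsBasis.union_indep_iff_of_isBasis {I I' X Y : Set α}
    (hI : M.IsBasis I X) (hI' : M.IsBasis I' X) :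
    M.Indep ((Y \ X) ∪ I) ↔ M.Indep ((Y \ X) ∪ I') := by
  rw [← hI.contract_indep_sdiff_iff, hI'.contract_indep_sdiff_iff]

lemma Indep.closure_union_inter_closure_subset {I J X : Set α}
    (hIJ : M.Indep (I ∪ J)) (hX : X ⊆ M.closure J) :
    M.closure (X ∪ I) ∩ M.closure J ⊆ M.closure (X ∪ (I ∩ J)) := by
  have hJ : M.IsBasis J (M.closure J) := (hIJ.subset subset_union_right).isBasis_closure
  set Y := I \ M.closure J
  have hIY : I ⊆ M.closure (I ∩ J) ∪ Y := by
    intro e heI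
    by_cases heJ : e ∈ M.closure J
    · exact .inl (hIJ.closure_inter_eq_inter_closure ▸
        ⟨M.mem_closure_of_mem heI (hIJ.subset subset_union_left).subset_ground, heJ⟩)
    · exact .inr ⟨heI, heJ⟩
  have hXIJ : X ∪ (I ∩ J) ⊆ M.closure J :=
    union_subset hX (inter_subset_right.trans hJ.subset)
  obtain ⟨J₀, hJ₀⟩ := M.exists_isBasis (X ∪ (I ∩ J)) (hXIJ.trans (M.closure_subset_ground J))
  obtain ⟨J₁, hJ₁, hJ₀J₁⟩ := hJ₀.indep.subset_isBasis_of_subset (hJ₀.subset.trans hXIJ)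
  have hind : M.Indep ((J₀ ∪ Y) ∪ J₁) := by
    rw [union_comm J₀, union_assoc, union_eq_self_of_subset_left hJ₀J₁]
    refine (hJ.union_indep_iff_of_isBasis hJ₁).1 (hIJ.subset ?_)
    exact union_subset_union_left J sdiff_subset
  have hmeet : (J₀ ∪ Y) ∩ J₁ = J₀ := by
    rw [union_inter_distrib_right, inter_eq_left.2 hJ₀J₁, union_eq_left]
    exact fun e ⟨heY, heJ₁⟩ ↦ absurd (hJ₁.subset heJ₁) heY.2
  have hXIJ_span : M.closure (X ∪ (I ∩ J)) ⊆ M.closure (J₀ ∪ Y) :=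
    hJ₀.closure_eq_closure ▸ M.closure_subset_closure subset_union_left
  have hY_span : Y ⊆ M.closure (J₀ ∪ Y) :=
    M.subset_closure_of_subset subset_union_right (hind.subset subset_union_left).subset_ground
  have hspan : X ∪ I ⊆ M.closure (J₀ ∪ Y) := union_subset
    ((M.subset_closure_of_subset subset_union_left
      (hXIJ.trans (M.closure_subset_ground J))).trans hXIJ_span)
    (hIY.trans <| union_subset
      ((M.closure_subset_closure subset_union_right).trans hXIJ_span) hY_span)
  calc M.closure (X ∪ I) ∩ M.closure J
      ⊆ M.closure (J₀ ∪ Y) ∩ M.closure J₁ := by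
        rw [hJ₁.closure_eq_right]
        exact inter_subset_inter_left _ (closure_subset_closure_of_subset_closure hspan)
    _ = M.closure J₀ := by rw [← hind.closure_inter_eq_inter_closure, hmeet]
    _ = M.closure (X ∪ (I ∩ J)) := hJ₀.closure_eq_closure

lemma IsModularPair.closure_union_inter_closure_subset {F G X : Set α}
    (h : M.IsModularPair F G) (hX : X ⊆ M.closure G) :
    M.closure (X ∪ F) ∩ M.closure G ⊆ M.closure (X ∪ (F ∩ G)) := by
  obtain ⟨B, hB, hbasis⟩ := h
  have hF : M.IsBasis (F ∩ B) F := hbasis F (by simp)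
  have hG : M.IsBasis (G ∩ B) G := hbasis G (by simp)
  rw [← hG.closure_eq_closure] at hX ⊢
  rw [← closure_union_congr_right hF.closure_eq_closure]
  have hFG : M.Indep ((F ∩ B) ∪ (G ∩ B)) :=
    hB.subset (union_subset inter_subset_right inter_subset_right)
  calc M.closure (X ∪ (F ∩ B)) ∩ M.closure (G ∩ B)
      ⊆ M.closure (X ∪ ((F ∩ B) ∩ (G ∩ B))) := hFG.closure_union_inter_closure_subset hX
    _ ⊆ M.closure (X ∪ (F ∩ G)) := M.closure_subset_closure <|
        union_subset_union_right _ (inter_subset_inter inter_subset_left inter_subset_left)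

lemma isModularPair_of_forall_closure_union_inter_subset {F G : Set α}
    (hF : F ⊆ M.E) (hG : M.IsFlat G)
    (h : ∀ G₁, M.IsFlat G₁ → G₁ ⊆ G → M.closure (G₁ ∪ F) ∩ G ⊆ M.closure (G₁ ∪ (F ∩ G))) :
    M.IsModularPair F G := by
  obtain ⟨K, hK⟩ := M.exists_isBasis (F ∩ G) (inter_subset_left.trans hF)
  obtain ⟨BF, hBF, hKBF⟩ := hK.indep.subset_isBasis_of_subset (hK.subset.trans inter_subset_left)
  obtain ⟨W, hW, hBFW⟩ := hBF.indep.subset_isBasis_of_subset (hBF.subset.trans subset_union_left)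
    (union_subset hF hG.subset_ground)
  have hFG : F ∩ G ⊆ M.closure (G ∩ W) :=
    hK.subset_closure.trans <| M.closure_subset_closure <|
      subset_inter (hK.subset.trans inter_subset_right) (hKBF.trans hBFW)
  have hWsub : W ⊆ (G ∩ W) ∪ F := fun e heW ↦
    (hW.subset heW).elim .inr fun heG ↦ .inl ⟨heG, heW⟩
  have hGspan : G ⊆ M.closure (G ∩ W) :=
    calc G ⊆ M.closure (M.closure (G ∩ W) ∪ F) ∩ G := by
          refine subset_inter ?_ subset_rfl
          rw [closure_union_closure_left_eq]
          exact (subset_union_right.trans hW.subset_closure).trans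
            (M.closure_subset_closure hWsub)
      _ ⊆ M.closure (M.closure (G ∩ W) ∪ (F ∩ G)) := h _ (M.isFlat_closure _)
          ((M.closure_subset_closure inter_subset_left).trans hG.closure.subset)
      _ = M.closure (G ∩ W) := by rw [union_eq_self_of_subset_right hFG, closure_closure]
  refine ⟨W, hW.indep, ?_⟩
  rintro X (rfl | rfl)
  · exact (hW.indep.inter_left X).isBasis_of_subset_of_subset_closure inter_subset_left <|
      hBF.subset_closure.trans (M.closure_subset_closure (subset_inter hBF.subset hBFW))
  · exact (hW.indep.inter_left X).isBasis_of_subset_of_subset_closure inter_subset_left hGspan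

end

/-- A flat `F` of `M` is modular iff for all flats `G₁ ⊆ G₂` of `M`,
`cl (G₁ ∪ F) ∩ G₂ = cl (G₁ ∪ (F ∩ G₂))`. -/
theorem isModularFlat_iff_forall_closure_inter (M : Matroid α) {F : Set α}
    (hF : M.IsFlat F) :
    M.IsModularFlat F ↔ ∀ G₁ G₂, M.IsFlat G₁ → M.IsFlat G₂ → G₁ ⊆ G₂ →
      M.closure (G₁ ∪ F) ∩ G₂ = M.closure (G₁ ∪ (F ∩ G₂)) := by
  have hle : ∀ G₁ G₂, M.IsFlat G₂ → G₁ ⊆ G₂ →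
      M.closure (G₁ ∪ (F ∩ G₂)) ⊆ M.closure (G₁ ∪ F) ∩ G₂ := fun G₁ G₂ hG₂ hG₁₂ ↦
    subset_inter (M.closure_subset_closure (union_subset_union_right _ inter_subset_left))
      ((M.closure_subset_closure (union_subset hG₁₂ inter_subset_right)).trans hG₂.closure.subset)
  refine ⟨fun hmod G₁ G₂ _ hG₂ hG₁₂ ↦ subset_antisymm ?_ (hle G₁ G₂ hG₂ hG₁₂),
    fun h ↦ ⟨hF, fun G hG ↦ ?_⟩⟩
  · have := (hmod.2 G₂ hG₂).closure_union_inter_closure_subset (hG₁₂.trans_eq hG₂.closure.symm)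
    rwa [hG₂.closure] at this
  · exact isModularPair_of_forall_closure_union_inter_subset hF.subset_ground hG
      fun G₁ hG₁ hG₁G ↦ (h G₁ G hG₁ hG hG₁G).subset
end Matroid
end
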